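/- Let K be the annulus {x ∈ ℝ^d : 1/2 ≤ ‖x‖₂ ≤ 1}, let x* be a unit vector, and for δ ∈ (0, 1] define φ_δ(x) := (1/3)(⟨x, x*⟩ x − ‖x‖₂² x*) + (δ/3)(‖x‖₂² − 5/8) x. Then ‖φ_δ(x)‖₂ ≤ 1 for all x ∈ K, and there exists ε₀ > 0 (one may take any ε₀ < δ/16) such that for all x ∈ K and all ε ∈ (0, ε₀], x − ε φ_δ(x) ∈ K. -/

import Mathlib

/-!
The rotational part `⟪x, x*⟫ x - ‖x‖² x*` of `φ_δ` is orthogonal to `x`, so only the radial part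
`(δ/3)(‖x‖² - 5/8) x` changes `‖x‖²` to first order:
`‖x - ε φ_δ(x)‖² - 5/8 = (‖x‖² - 5/8)(1 - (2εδ/3)‖x‖²) + ε² ‖φ_δ(x)‖²`.
Since `K = {x | |‖x‖² - 5/8| ≤ 3/8}`, the contraction factor `1 - (2εδ/3)‖x‖² ≤ 1 - εδ/6` gains
`εδ/16` on the annulus, which beats the error `ε² ‖φ_δ(x)‖² ≤ ε²` once `ε ≤ δ/16`.
-/

open scoped RealInnerProductSpace

/-- The vector field `φ_δ` used in the zero-one loss analysis. -/
noncomputable def phiField {d : ℕ} (xs : EuclideanSpace ℝ (Fin d)) (δ : ℝ)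
    (x : EuclideanSpace ℝ (Fin d)) : EuclideanSpace ℝ (Fin d) :=
  (1 / 3 : ℝ) • (⟪x, xs⟫ • x - ‖x‖ ^ 2 • xs) +
    (δ / 3) • ((‖x‖ ^ 2 - 5 / 8) • x)

lemma half_le_and_le_one_iff_abs_sq_sub_le {r : ℝ} (hr : 0 ≤ r) :
    (1 / 2 ≤ r ∧ r ≤ 1) ↔ |r ^ 2 - 5 / 8| ≤ 3 / 8 := by
  rw [abs_le]
  constructor
  · rintro ⟨h₁, h₂⟩
    constructor <;> nlinarith
  · rintro ⟨h₁, h₂⟩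
    constructor <;> nlinarith

lemma abs_annulus_step_le {δ ε t q : ℝ} (hδ : δ ≤ 1) (hε₀ : 0 ≤ ε) (hε : ε ≤ δ / 16)
    (ht : |t - 5 / 8| ≤ 3 / 8) (hq₀ : 0 ≤ q) (hq : q ≤ ε ^ 2) :
    |(t - 5 / 8) * (1 - 2 * ε * δ / 3 * t) + q| ≤ 3 / 8 := by
  rw [abs_le] at ht ⊢
  obtain ⟨ht₁, ht₂⟩ := ht
  have hεδ : 0 ≤ ε * δ := by nlinarith
  have hc₀ : 0 ≤ 1 - 2 * ε * δ / 3 * t := by nlinarith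
  have hc₁ : 1 - 2 * ε * δ / 3 * t ≤ 1 - ε * δ / 6 := by nlinarith
  have hq' : q ≤ ε * δ / 16 := by nlinarith
  constructor <;> nlinarith

section phiField

variable {d : ℕ} (xs : EuclideanSpace ℝ (Fin d)) (δ : ℝ) (x : EuclideanSpace ℝ (Fin d))

lemma inner_phiField : ⟪x, phiField xs δ x⟫ = δ / 3 * (‖x‖ ^ 2 - 5 / 8) * ‖x‖ ^ 2 := by
  simp only [phiField, inner_add_right, inner_smul_right, inner_sub_right,
    real_inner_self_eq_norm_sq]
  ring

lemma norm_sub_smul_phiField_sq_sub (ε : ℝ) :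
    ‖x - ε • phiField xs δ x‖ ^ 2 - 5 / 8 =
      (‖x‖ ^ 2 - 5 / 8) * (1 - 2 * ε * δ / 3 * ‖x‖ ^ 2) + ε ^ 2 * ‖phiField xs δ x‖ ^ 2 := by
  rw [norm_sub_sq_real, inner_smul_right, inner_phiField, norm_smul, mul_pow,
    Real.norm_eq_abs, sq_abs]
  ring

variable {xs δ x} in
lemma norm_phiField_le_one (hxs : ‖xs‖ = 1) (hδ₀ : 0 ≤ δ) (hδ₁ : δ ≤ 1) (hx : ‖x‖ ≤ 1) :
    ‖phiField xs δ x‖ ≤ 1 := by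
  have hrot : ‖⟪x, xs⟫ • x - ‖x‖ ^ 2 • xs‖ ≤ 2 := by
    have hinner : |⟪x, xs⟫| ≤ 1 := by
      simpa [hxs] using (abs_real_inner_le_norm x xs).trans (by nlinarith [norm_nonneg x])
    calc ‖⟪x, xs⟫ • x - ‖x‖ ^ 2 • xs‖ ≤ |⟪x, xs⟫| * ‖x‖ + ‖x‖ ^ 2 := by
          refine (norm_sub_le _ _).trans_eq ?_
          rw [norm_smul, norm_smul, Real.norm_eq_abs, norm_pow, norm_norm, hxs, mul_one]
      _ ≤ 2 := by nlinarith [abs_nonneg ⟪x, xs⟫, norm_nonneg x]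
  have hrad : |‖x‖ ^ 2 - 5 / 8| * ‖x‖ ≤ 5 / 8 := by
    have habs : |‖x‖ ^ 2 - 5 / 8| ≤ 5 / 8 :=
      abs_le.mpr ⟨by nlinarith, by nlinarith [norm_nonneg x]⟩
    nlinarith [abs_nonneg (‖x‖ ^ 2 - 5 / 8), norm_nonneg x]
  calc ‖phiField xs δ x‖
      ≤ 1 / 3 * ‖⟪x, xs⟫ • x - ‖x‖ ^ 2 • xs‖ + δ / 3 * (|‖x‖ ^ 2 - 5 / 8| * ‖x‖) := by
        refine (norm_add_le _ _).trans_eq ?_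
        rw [norm_smul, norm_smul, norm_smul, Real.norm_eq_abs, Real.norm_eq_abs,
          Real.norm_eq_abs, abs_of_nonneg (by norm_num : (0 : ℝ) ≤ 1 / 3),
          abs_of_nonneg (by positivity : 0 ≤ δ / 3)]
    _ ≤ 1 := by nlinarith

end phiField

theorem phiField_valid
    {d : ℕ} (xs : EuclideanSpace ℝ (Fin d)) (hxs : ‖xs‖ = 1)
    (δ : ℝ) (hδ0 : 0 < δ) (hδ1 : δ ≤ 1) :
    (∀ x : EuclideanSpace ℝ (Fin d),
      1 / 2 ≤ ‖x‖ → ‖x‖ ≤ 1 → ‖phiField xs δ x‖ ≤ 1) ∧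
    ∃ ε₀ > (0 : ℝ), ∀ x : EuclideanSpace ℝ (Fin d),
      1 / 2 ≤ ‖x‖ → ‖x‖ ≤ 1 → ∀ ε : ℝ, 0 < ε → ε ≤ ε₀ →
        1 / 2 ≤ ‖x - ε • phiField xs δ x‖ ∧ ‖x - ε • phiField xs δ x‖ ≤ 1 := by
  refine ⟨fun x _ hx => norm_phiField_le_one hxs hδ0.le hδ1 hx, δ / 16, by positivity,
    fun x hx₁ hx₂ ε hε₀ hε => ?_⟩
  have hφ := norm_phiField_le_one hxs hδ0.le hδ1 hx₂
  rw [half_le_and_le_one_iff_abs_sq_sub_le (norm_nonneg _), norm_sub_smul_phiField_sq_sub]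
  refine abs_annulus_step_le hδ1 hε₀.le hε
    ((half_le_and_le_one_iff_abs_sq_sub_le (norm_nonneg x)).mp ⟨hx₁, hx₂⟩)
    (by positivity) ?_
  exact mul_le_of_le_one_right (sq_nonneg ε) (pow_le_one₀ (norm_nonneg _) hφ)
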